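/- arXiv:1111.0595 — 3 statements merged into one kernel-verified Lean document; each statement's English description precedes it below -/
import Mathlib

section
/- (Rate Increase Lemma, single-step version) Let F be a field, H11 : Matrix (Fin m) (Fin n) F, and B : Matrix (Fin m) (Fin p) F, and M1 : Matrix (Fin n) (Fin r1) F a full column rank matrix with rank([H11·M1 B]) = r1 + rank(B). If rank([H11 B]) > r1 + rank(B), then there exists a vector α ∈ F^n such that the augmented matrix M1' = [α M1] (adjoining α as a new column) has full column rank r1 + 1 and rank([H11·M1' B]) = r1 + 1 + rank(B). -/
/-!
Since `rank [H11 B]` exceeds `rank [H11·M1 B]`, some column `H11 e_j` lies outside the column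
space `W` of `[H11·M1 B]`. Take `α = e_j`. Then `α` is not in the column space of `M1`, for
otherwise `H11 α` would lie in the column space of `H11·M1`, which is contained in `W`. So
adjoining `α` raises the rank of `M1` by one, and adjoining `H11 α` raises `dim W` by one.
-/

open Matrix Submodule

namespace Matrix

variable {R : Type*} {m k l o : Type*} [Fintype k] [Fintype l]

theorem range_mulVecLin_fromCols [CommSemiring R] (A : Matrix m k R) (B : Matrix m l R) :
    LinearMap.range (fromCols A B).mulVecLin =
      LinearMap.range A.mulVecLin ⊔ LinearMap.range B.mulVecLin := by
  rw [range_mulVecLin, range_mulVecLin, range_mulVecLin, ← span_union, ← Set.Sum.elim_range]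
  congr 2
  ext (j | j) i <;> rfl

theorem range_mulVecLin_replicateCol [CommSemiring R] [Unique k] (v : m → R) :
    LinearMap.range (replicateCol k v).mulVecLin = span R {v} := by
  rw [range_mulVecLin, ← Set.range_const (ι := k) (c := v)]
  rfl

theorem rank_fromCols_assoc [CommSemiring R] [Fintype o] (A : Matrix m k R) (B : Matrix m l R)
    (C : Matrix m o R) : (fromCols (fromCols A B) C).rank = (fromCols A (fromCols B C)).rank := by
  rw [rank, rank, range_mulVecLin_fromCols, range_mulVecLin_fromCols, range_mulVecLin_fromCols,
    range_mulVecLin_fromCols, sup_assoc]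

theorem mulVec_mem_range_mul [CommSemiring R] [Fintype m] (A : Matrix o m R) (M : Matrix m k R)
    {v : m → R} (hv : v ∈ LinearMap.range M.mulVecLin) :
    A *ᵥ v ∈ LinearMap.range (A * M).mulVecLin := by
  obtain ⟨x, rfl⟩ := hv
  exact ⟨x, by simp [mulVec_mulVec]⟩

theorem exists_col_notMem_of_range_not_le [CommSemiring R] {A : Matrix m k R}
    {S : Submodule R (m → R)} (h : ¬ LinearMap.range A.mulVecLin ≤ S) :
    ∃ j, A.col j ∉ S := by
  contrapose! h
  rw [range_mulVecLin, span_le]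
  rintro _ ⟨j, rfl⟩
  exact h j

theorem rank_fromCols_le_of_range_le [CommRing R] [StrongRankCondition R] [Fintype o]
    {A : Matrix m k R} {B : Matrix m l R} {C : Matrix m o R}
    (h : LinearMap.range A.mulVecLin ≤ LinearMap.range (fromCols C B).mulVecLin) :
    (fromCols A B).rank ≤ (fromCols C B).rank := by
  apply Submodule.finrank_mono
  rw [range_mulVecLin_fromCols A B]
  exact sup_le h (range_mulVecLin_fromCols C B ▸ le_sup_right)

theorem rank_fromCols_replicateCol_of_notMem {F : Type*} [Field F] [Fintype m] [Unique l]
    {A : Matrix m k F} {v : m → F} (hv : v ∉ LinearMap.range A.mulVecLin) :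
    (fromCols (replicateCol l v) A).rank = A.rank + 1 := by
  rw [rank, range_mulVecLin_fromCols, range_mulVecLin_replicateCol, sup_comm,
    finrank_sup_span_singleton hv, rank]

end Matrix

/-- Rate Increase Lemma (single step): if `M1` has full column rank `r1`,
`rank [H11·M1 B] = r1 + rank B`, and `rank [H11 B] > r1 + rank B`, then one can adjoin
a column `α` to `M1` obtaining `M1'` of full column rank `r1 + 1` with
`rank [H11·M1' B] = r1 + 1 + rank B`. -/
theorem stmt_5 {F : Type*} [Field F] {m n p r1 : ℕ}
    (H11 : Matrix (Fin m) (Fin n) F) (B : Matrix (Fin m) (Fin p) F)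
    (M1 : Matrix (Fin n) (Fin r1) F)
    (hM1 : M1.rank = r1)
    (hr : (Matrix.fromCols (H11 * M1) B).rank = r1 + B.rank)
    (hgt : (Matrix.fromCols H11 B).rank > r1 + B.rank) :
    ∃ α : Fin n → F,
      (Matrix.fromCols (Matrix.of fun i (_ : Fin 1) => α i) M1).rank = r1 + 1 ∧
      (Matrix.fromCols
        (H11 * Matrix.fromCols (Matrix.of fun i (_ : Fin 1) => α i) M1) B).rank
          = r1 + 1 + B.rank := by
  have hH11 :
      ¬ LinearMap.range H11.mulVecLin ≤ LinearMap.range (fromCols (H11 * M1) B).mulVecLin :=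
    fun hle => by have := rank_fromCols_le_of_range_le hle; omega
  obtain ⟨j, hj⟩ := exists_col_notMem_of_range_not_le hH11
  have hα : Pi.single j 1 ∉ LinearMap.range M1.mulVecLin := fun hmem => hj <| by
    rw [range_mulVecLin_fromCols, ← mulVec_single_one]
    exact mem_sup_left (mulVec_mem_range_mul H11 M1 hmem)
  refine ⟨Pi.single j 1, ?_, ?_⟩
  · exact (rank_fromCols_replicateCol_of_notMem hα).trans (by rw [hM1])
  · change (fromCols (H11 * fromCols (replicateCol (Fin 1) (Pi.single j 1)) M1) B).rank = _
    rw [mul_fromCols, ← replicateCol_mulVec, mulVec_single_one, rank_fromCols_assoc,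
      rank_fromCols_replicateCol_of_notMem hj, hr]
    ring
end

section
/- (Rate Increase Lemma) Let F be a field, H11 : Matrix (Fin m) (Fin n) F, B : Matrix (Fin m) (Fin p) F, and M1 : Matrix (Fin n) (Fin r1) F a full column rank matrix with rank([H11·M1 B]) = r1 + R2 where R2 = rank(B). Let r = rank([H11 B]) ≥ r1 + R2. Then for every k with 0 ≤ k ≤ r − r1 − R2 there exists a matrix M1⁽ᵏ⁾ of dimension n × (r1 + k), whose last r1 columns are the columns of M1, such that M1⁽ᵏ⁾ has full column rank and rank([H11·M1⁽ᵏ⁾ B]) = r1 + R2 + k. -/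
/-! The columns of `H11·M1` and `B` span a subspace `W` of dimension `r1 + R2` inside the column
space of `[H11 B]`, which has dimension `r`. While the current span is smaller than that column
space, some vector `H11·x` lies outside it, and adjoining `x` as a new column raises the rank of
`[H11·M B]` by exactly one. Full column rank of the result is then automatic, since
`rank [H11·M B] ≤ rank M + rank B`. -/

open Matrix Submodule Module Set

namespace Submodule

variable {K V : Type*} [DivisionRing K] [AddCommGroup V] [Module K V] [FiniteDimensional K V]

theorem exists_mem_finrank_span_range_sup_eq (s : Set V) (W : Submodule K V) {k : ℕ}
    (hk : k ≤ finrank K ↥(span K s ⊔ W) - finrank K W) :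
    ∃ u : Fin k → V, (∀ i, u i ∈ s) ∧
      finrank K ↥(span K (range u) ⊔ W) = finrank K W + k := by
  induction k with
  | zero =>
    exact ⟨Fin.elim0, fun i => i.elim0, by rw [range_eq_empty, span_empty, bot_sup_eq, add_zero]⟩
  | succ k ih =>
    obtain ⟨u, hus, hu⟩ := ih (by omega)
    have hlt : finrank K ↥(span K (range u) ⊔ W) < finrank K ↥(span K s ⊔ W) := by omega
    obtain ⟨x, hxs, hx⟩ : ∃ x ∈ s, x ∉ span K (range u) ⊔ W := by
      by_contra! hs
      exact hlt.not_ge (finrank_mono (sup_le (span_le.mpr hs) le_sup_right))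
    refine ⟨Fin.cons x u, Fin.cons hxs hus, ?_⟩
    rw [Fin.range_cons, span_insert, sup_assoc, sup_comm, finrank_sup_span_singleton hx, hu,
      add_assoc]

end Submodule

namespace Matrix

variable {R : Type*} {m n ι κ : Type*}

theorem span_range_col_fromCols [Semiring R] (A : Matrix m ι R) (B : Matrix m κ R) :
    span R (range (fromCols A B).col) = span R (range A.col) ⊔ span R (range B.col) := by
  rw [← span_union, ← Set.Sum.elim_range]
  congr 2
  ext (j | j) <;> rfl

theorem rank_fromCols [CommSemiring R] [Fintype ι] [Fintype κ] (A : Matrix m ι R)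
    (B : Matrix m κ R) :
    (fromCols A B).rank = finrank R ↥(span R (range A.col) ⊔ span R (range B.col)) := by
  rw [rank_eq_finrank_span_cols, span_range_col_fromCols]

theorem col_mul [Fintype n] [NonUnitalNonAssocSemiring R] (A : Matrix m n R) (B : Matrix n ι R)
    (j : ι) :
    (A * B).col j = A *ᵥ B.col j := by
  ext i; rfl

theorem span_range_col_mul_le [Fintype n] [CommSemiring R] (A : Matrix m n R)
    (B : Matrix n ι R) :
    span R (range (A * B).col) ≤ LinearMap.range A.mulVecLin :=
  span_le.mpr <| by rintro _ ⟨j, rfl⟩; exact ⟨B.col j, (col_mul A B j).symm⟩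

variable [Field R]

theorem rank_fromCols_le [Fintype m] [Fintype ι] [Fintype κ] (A : Matrix m ι R)
    (B : Matrix m κ R) :
    (fromCols A B).rank ≤ A.rank + B.rank := by
  rw [rank_fromCols, rank_eq_finrank_span_cols, rank_eq_finrank_span_cols]
  exact finrank_add_le_finrank_add_finrank _ _

theorem rank_eq_card_of_rank_fromCols_mul [Fintype m] [Fintype n] [Fintype ι] [Fintype κ]
    (H : Matrix m n R) (M : Matrix n ι R) (B : Matrix m κ R)
    (h : (fromCols (H * M) B).rank = Fintype.card ι + B.rank) :
    M.rank = Fintype.card ι := by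
  have := rank_fromCols_le (H * M) B
  have := rank_mul_le_right H M
  have := rank_le_card_width M
  omega

end Matrix

theorem stmt_6_general {F : Type*} [Field F] {m n p r1 R2 r : ℕ}
    (H11 : Matrix (Fin m) (Fin n) F) (B : Matrix (Fin m) (Fin p) F)
    (M1 : Matrix (Fin n) (Fin r1) F)
    (hR2 : B.rank = R2)
    (hbase : (Matrix.fromCols (H11 * M1) B).rank = r1 + R2)
    (hr : (Matrix.fromCols H11 B).rank = r) :
    ∀ k, k ≤ r - r1 - R2 →
      ∃ M1k : Matrix (Fin n) (Fin k ⊕ Fin r1) F,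
        (∀ i j, M1k i (Sum.inr j) = M1 i j) ∧
        M1k.rank = r1 + k ∧
        (Matrix.fromCols (H11 * M1k) B).rank = r1 + R2 + k := by
  intro k hk
  set W := span F (range (H11 * M1).col) ⊔ span F (range B.col)
  have hW : finrank F W = r1 + R2 := by rw [← hbase, rank_fromCols]
  have hrangeW :
      LinearMap.range H11.mulVecLin ⊔ W = span F (range H11.col) ⊔ span F (range B.col) := by
    rw [← sup_assoc, sup_eq_left.mpr (span_range_col_mul_le H11 M1), range_mulVecLin]
  obtain ⟨u, hu_mem, hu⟩ :=
    exists_mem_finrank_span_range_sup_eq (LinearMap.range H11.mulVecLin : Set (Fin m → F)) W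
      (k := k) (by rw [span_eq, hrangeW, ← rank_fromCols, hr, hW]; omega)
  choose c hc using fun i => LinearMap.mem_range.mp (hu_mem i)
  set M1k := fromCols (of c)ᵀ M1
  have hcols : (H11 * (of c)ᵀ).col = u := funext fun i => (col_mul _ _ i).trans (hc i)
  have hrank : (fromCols (H11 * M1k) B).rank = r1 + R2 + k := by
    rw [mul_fromCols, rank_fromCols, span_range_col_fromCols, hcols, sup_assoc, hu, hW]
  have hM1k := rank_eq_card_of_rank_fromCols_mul H11 M1k B <| by
    simp only [hrank, hR2, Fintype.card_sum, Fintype.card_fin]; omega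
  refine ⟨M1k, fun _ _ => rfl, ?_, hrank⟩
  simpa only [Fintype.card_sum, Fintype.card_fin, add_comm] using hM1k

/-- Rate Increase Lemma: if `M1` has full column rank `r1` and
`rank [H11·M1 B] = r1 + R2` with `R2 = rank B`, and `r = rank [H11 B] ≥ r1 + R2`,
then for every `k ≤ r - r1 - R2` there is a full column rank matrix `M1⁽ᵏ⁾` with
`r1 + k` columns whose last `r1` columns are those of `M1` and with
`rank [H11·M1⁽ᵏ⁾ B] = r1 + R2 + k`. -/
theorem stmt_6 {F : Type*} [Field F] {m n p r1 R2 r : ℕ}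
    (H11 : Matrix (Fin m) (Fin n) F) (B : Matrix (Fin m) (Fin p) F)
    (M1 : Matrix (Fin n) (Fin r1) F)
    (hM1 : M1.rank = r1)
    (hR2 : B.rank = R2)
    (hbase : (Matrix.fromCols (H11 * M1) B).rank = r1 + R2)
    (hr : (Matrix.fromCols H11 B).rank = r)
    (hge : r ≥ r1 + R2) :
    ∀ k, k ≤ r - r1 - R2 →
      ∃ M1k : Matrix (Fin n) (Fin k ⊕ Fin r1) F,
        (∀ i j, M1k i (Sum.inr j) = M1 i j) ∧
        M1k.rank = r1 + k ∧
        (Matrix.fromCols (H11 * M1k) B).rank = r1 + R2 + k :=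
  stmt_6_general H11 B M1 hR2 hbase hr
end

section
/- Let F be a field, H : Matrix (Fin m) (Fin n) F of rank at least r1, and B : Matrix (Fin m) (Fin p) F, with rank([H B]) = r. Then for any full column rank M with r1 columns satisfying rank([H·M B]) = r, it holds that rank(H·M) = r1 and span(H·M) ∩ span(B) = {0}, provided r1 + rank(B) = r. -/
/-!
Writing `S`, `T` for the column spaces of `H·M` and `B`, the hypotheses give
`dim (S ⊔ T) = r = r1 + dim T` while `dim S ≤ rank M = r1`. Since
`dim (S ⊔ T) + dim (S ⊓ T) = dim S + dim T ≤ r1 + dim T`, equality holds throughout: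
`dim S = r1` and `S ⊓ T = 0`.
-/

theorem Matrix.range_mulVecLin_fromCols_s13 {R : Type*} [CommSemiring R] {m n₁ n₂ : Type*}
    [Fintype n₁] [Fintype n₂] (A : Matrix m n₁ R) (B : Matrix m n₂ R) :
    LinearMap.range (Matrix.fromCols A B).mulVecLin =
      LinearMap.range A.mulVecLin ⊔ LinearMap.range B.mulVecLin := by
  have hfactor : (Matrix.fromCols A B).mulVecLin =
      A.mulVecLin.coprod B.mulVecLin ∘ₗ
        (LinearEquiv.sumArrowLequivProdArrow n₁ n₂ R R).toLinearMap := by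
    refine LinearMap.ext fun v => ?_
    simp only [LinearMap.comp_apply, LinearMap.coprod_apply, Matrix.mulVecLin_apply,
      Matrix.fromCols_mulVec]
    rfl
  rw [hfactor, LinearMap.range_comp_of_range_eq_top _ (LinearEquiv.range _),
    LinearMap.range_coprod]

theorem Submodule.finrank_eq_and_inf_eq_bot_of_le {K V : Type*} [DivisionRing K]
    [AddCommGroup V] [Module K V] {S T : Submodule K V} [FiniteDimensional K S]
    [FiniteDimensional K T] {k : ℕ} (hS : Module.finrank K S ≤ k)
    (hsup : k + Module.finrank K T ≤ Module.finrank K ↥(S ⊔ T)) :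
    Module.finrank K S = k ∧ S ⊓ T = ⊥ := by
  have hdim := Submodule.finrank_sup_add_finrank_inf_eq S T
  exact ⟨by omega, Submodule.finrank_eq_zero.mp (by omega)⟩

theorem stmt_13_general {F : Type*} [Field F] {m n p r1 r : ℕ}
    (H : Matrix (Fin m) (Fin n) F) (B : Matrix (Fin m) (Fin p) F)
    (M : Matrix (Fin n) (Fin r1) F)
    (hM : M.rank = r1)
    (hHM : (Matrix.fromCols (H * M) B).rank = r)
    (hsum : r1 + B.rank = r) :
    (H * M).rank = r1 ∧
      LinearMap.range (H * M).mulVecLin ⊓ LinearMap.range B.mulVecLin = ⊥ := by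
  have hrank_le : (H * M).rank ≤ r1 := (Matrix.rank_mul_le_right H M).trans hM.le
  have hsup : Module.finrank F ↥(LinearMap.range (H * M).mulVecLin ⊔
      LinearMap.range B.mulVecLin) = r := by
    rw [← Matrix.range_mulVecLin_fromCols_s13]
    exact hHM
  exact Submodule.finrank_eq_and_inf_eq_bot_of_le hrank_le (hsum.trans hsup.symm).le

/-- Squeeze argument: if `rank H ≥ r1`, `rank [H B] = r`, `M` has full column rank `r1`,
`rank [H·M B] = r` and `r1 + rank B = r`, then `rank (H·M) = r1` and
`span (H·M) ⊓ span B = {0}`. -/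
theorem stmt_13 {F : Type*} [Field F] {m n p r1 r : ℕ}
    (H : Matrix (Fin m) (Fin n) F) (B : Matrix (Fin m) (Fin p) F)
    (hH : H.rank ≥ r1)
    (hr : (Matrix.fromCols H B).rank = r)
    (M : Matrix (Fin n) (Fin r1) F)
    (hM : M.rank = r1)
    (hHM : (Matrix.fromCols (H * M) B).rank = r)
    (hsum : r1 + B.rank = r) :
    (H * M).rank = r1 ∧
      LinearMap.range (H * M).mulVecLin ⊓ LinearMap.range B.mulVecLin = ⊥ :=
  stmt_13_general H B M hM hHM hsum
end
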